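/- Let ν > 1 and let A ∈ ℝ^{5×5} be the matrix with rows (1,0,0,1,0), (0,1,0,ν,0), (0,0,1,0,0), (−ν,1,0,0,0), (0,0,0,0,1), partitioned with k = 3 so that A11 = I₃ (the 3×3 identity), A12 = [[1,0],[ν,0],[0,0]], A21 = [[−ν,1,0],[0,0,0]], A22 = [[0,0],[0,1]]. Then: (a) σ_3(A) = σ_4(A) = 1, so σ_3(A) ≤ σ_3(A11) = 1; (b) the Schur complement S(A11) = A22 − A21·A11⁻¹·A12 satisfies ‖S(A11)‖₂ = 1 = σ_4(A); (c) ‖A21A11⁻¹‖_max = ‖A11⁻¹A12‖_max = ν; and yet (d) the 3×3 submatrix A([2,3,4],[1,3,4]) satisfies vol(A([2,3,4],[1,3,4])) = ν² = ν²·vol(A11). In particular, A11 is not a γ-local maximum volume 3×3 submatrix of A for any γ < ν². -/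

import Mathlib

/-!
`sval A j` is the distance from `A` to the matrices of rank `< j`, so a rank-`(j - 1)`
approximant bounds it from above, and a subspace of dimension `j` on which `‖A x‖ ≥ c ‖x‖`
bounds it from below, since every matrix of rank `< j` kills a nonzero vector of that subspace.
For `A = eA ν`, row 4 is `row 2 - ν • row 1`, so `A` is a rank-2 matrix plus a diagonal with
entries `0, 1`, whence `σ₃(A) ≤ 1`; on the hyperplane `x₄ = x₁ + ν x₂` one has `‖A x‖ ≥ ‖x‖`,
whence `σ₄(A) ≥ 1`. The submatrix `A([2,3,4],[1,3,4])` acts as `ν` times a rotation on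
coordinates 1, 3 and as the identity on coordinate 2, so its singular values are `ν, ν, 1`.
-/

open Matrix

/-- The spectral norm (`‖·‖₂`, largest singular value) of a real matrix. -/
noncomputable def specNorm {m n : Type*} [Fintype m] [Fintype n] [DecidableEq n]
    (A : Matrix m n ℝ) : ℝ :=
  ‖LinearMap.toContinuousLinearMap (Matrix.toEuclideanLin A)‖

/-- `sval A j` is the `j`-th largest singular value of `A` (1-indexed), characterized as the
distance, in the spectral norm, from `A` to the set of matrices of rank `< j`. -/
noncomputable def sval {m n : Type*} [Fintype m] [Fintype n] [DecidableEq n]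
    (A : Matrix m n ℝ) (j : ℕ) : ℝ :=
  sInf {x : ℝ | ∃ B : Matrix m n ℝ, B.rank < j ∧ x = specNorm (A - B)}

/-- The volume of a matrix: the product of its singular values. -/
noncomputable def vol {m n : Type*} [Fintype m] [Fintype n] [DecidableEq n]
    (A : Matrix m n ℝ) : ℝ :=
  ∏ j ∈ Finset.Icc 1 (min (Fintype.card m) (Fintype.card n)), sval A j

/-- `DiffOne b r` : `r` is an injective selection of indices whose image (index set)
differs from the index set selected by `b` in at most one element. -/
def DiffOne {ι α : Type*} [Fintype ι] [DecidableEq α] (b r : ι → α) : Prop :=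
  Function.Injective r ∧ (Finset.univ.image r \ Finset.univ.image b).card ≤ 1

/-- The maximum absolute value of the entries of a matrix. -/
noncomputable def maxAbs {m n : Type*} [Fintype m] [Fintype n] (A : Matrix m n ℝ) : ℝ :=
  ⨆ i, ⨆ j, |A i j|

noncomputable def eA12 (ν : ℝ) : Matrix (Fin 3) (Fin 2) ℝ := !![1, 0; ν, 0; 0, 0]

noncomputable def eA21 (ν : ℝ) : Matrix (Fin 2) (Fin 3) ℝ := !![-ν, 1, 0; 0, 0, 0]

noncomputable def eA22 : Matrix (Fin 2) (Fin 2) ℝ := !![0, 0; 0, 1]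

/-- The 5×5 example with rows (1,0,0,1,0), (0,1,0,ν,0), (0,0,1,0,0), (−ν,1,0,0,0),
(0,0,0,0,1), in 3/2 block form; A11 = I₃. -/
noncomputable def eA (ν : ℝ) : Matrix (Fin 3 ⊕ Fin 2) (Fin 3 ⊕ Fin 2) ℝ :=
  Matrix.fromBlocks 1 (eA12 ν) (eA21 ν) eA22

open Module

section SingularValues

variable {m n : Type*} [Fintype m] [Fintype n] [DecidableEq n]

lemma specNorm_diagonal (d : n → ℝ) : specNorm (diagonal d) = ‖d‖ :=
  l2_opNorm_diagonal d

lemma norm_toEuclideanLin_le (A : Matrix m n ℝ) (x : EuclideanSpace ℝ n) :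
    ‖toEuclideanLin A x‖ ≤ specNorm A * ‖x‖ :=
  (toEuclideanLin A).toContinuousLinearMap.le_opNorm x

lemma specNorm_le_of_forall_norm_sq_le (A : Matrix m n ℝ) {c : ℝ} (hc : 0 ≤ c)
    (h : ∀ x, ‖toEuclideanLin A x‖ ^ 2 ≤ c ^ 2 * ‖x‖ ^ 2) : specNorm A ≤ c :=
  ContinuousLinearMap.opNorm_le_bound _ hc fun x =>
    (pow_le_pow_iff_left₀ (norm_nonneg _) (by positivity) two_ne_zero).1
      (mul_pow c ‖x‖ 2 ▸ h x)

lemma rank_eq_finrank_range_toEuclideanLin (B : Matrix m n ℝ) :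
    B.rank = finrank ℝ (LinearMap.range (toEuclideanLin B)) := by
  rw [toEuclideanLin, toLpLin_eq_toLin]
  exact rank_eq_finrank_range_toLin B _ _

lemma exists_mem_ker_ne_zero_of_rank_lt (B : Matrix m n ℝ)
    (V : Submodule ℝ (EuclideanSpace ℝ n)) (h : B.rank < finrank ℝ V) :
    ∃ x ∈ V, toEuclideanLin B x = 0 ∧ x ≠ 0 := by
  by_contra! hker
  set f := (toEuclideanLin B).domRestrict V
  have hf : Function.Injective f := by
    refine LinearMap.ker_eq_bot.1 (eq_bot_iff.2 fun x hx => ?_)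
    exact (Submodule.mem_bot ℝ).2 (Subtype.ext (hker x x.2 hx))
  have : finrank ℝ V ≤ B.rank := calc
    finrank ℝ V = finrank ℝ (LinearMap.range f) := (LinearMap.finrank_range_of_inj hf).symm
    _ ≤ finrank ℝ (LinearMap.range (toEuclideanLin B)) :=
      Submodule.finrank_mono (LinearMap.range_domRestrict_le_range _ _)
    _ = B.rank := (rank_eq_finrank_range_toEuclideanLin B).symm
  omega

lemma sval_le_specNorm_sub (A B : Matrix m n ℝ) {j : ℕ} (hB : B.rank < j) :
    sval A j ≤ specNorm (A - B) :=
  csInf_le ⟨0, fun _ ⟨_, _, hx⟩ => hx ▸ norm_nonneg _⟩ ⟨B, hB, rfl⟩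

lemma sval_le_specNorm (A : Matrix m n ℝ) {j : ℕ} (hj : 0 < j) : sval A j ≤ specNorm A := by
  simpa using sval_le_specNorm_sub A 0 (by simpa using hj)

lemma sval_mul_add_le_specNorm {k : ℕ} (C : Matrix m (Fin k) ℝ) (D : Matrix (Fin k) n ℝ)
    (E : Matrix m n ℝ) {j : ℕ} (hkj : k < j) : sval (C * D + E) j ≤ specNorm E := by
  have hCD : (C * D).rank < j :=
    ((rank_mul_le_left C D).trans (by simpa using C.rank_le_card_width)).trans_lt hkj
  simpa using sval_le_specNorm_sub (C * D + E) (C * D) hCD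

lemma le_sval_of_subspace (A : Matrix m n ℝ) {j : ℕ} (hj : 0 < j) {c : ℝ} (hc : 0 ≤ c)
    (V : Submodule ℝ (EuclideanSpace ℝ n)) (hV : j ≤ finrank ℝ V)
    (h : ∀ x ∈ V, c ^ 2 * ‖x‖ ^ 2 ≤ ‖toEuclideanLin A x‖ ^ 2) : c ≤ sval A j := by
  refine le_csInf ⟨specNorm A, 0, by simpa using hj, by simp⟩ ?_
  rintro _ ⟨B, hB, rfl⟩
  obtain ⟨x, hxV, hxB, hx0⟩ := exists_mem_ker_ne_zero_of_rank_lt B V (hB.trans_le hV)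
  have hAx : c * ‖x‖ ≤ ‖toEuclideanLin A x‖ :=
    (pow_le_pow_iff_left₀ (by positivity) (norm_nonneg _) two_ne_zero).1
      (mul_pow c ‖x‖ 2 ▸ h x hxV)
  have hABx : toEuclideanLin (A - B) x = toEuclideanLin A x := by
    rw [map_sub, LinearMap.sub_apply, hxB, sub_zero]
  refine le_of_mul_le_mul_right ?_ (norm_pos_iff.2 hx0)
  exact hAx.trans (hABx ▸ norm_toEuclideanLin_le (A - B) x)

lemma le_sval_of_forall (A : Matrix m n ℝ) {j : ℕ} (hj : 0 < j) (hjn : j ≤ Fintype.card n)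
    {c : ℝ} (hc : 0 ≤ c) (h : ∀ x, c ^ 2 * ‖x‖ ^ 2 ≤ ‖toEuclideanLin A x‖ ^ 2) :
    c ≤ sval A j :=
  le_sval_of_subspace A hj hc ⊤ (by simpa using hjn) fun x _ => h x

lemma le_sval_of_orthogonal_singleton (A : Matrix m n ℝ) {j : ℕ} (hj : 0 < j)
    (hjn : j + 1 ≤ Fintype.card n) {c : ℝ} (hc : 0 ≤ c) {w : EuclideanSpace ℝ n}
    (hw : w ≠ 0)
    (h : ∀ x, inner ℝ w x = 0 → c ^ 2 * ‖x‖ ^ 2 ≤ ‖toEuclideanLin A x‖ ^ 2) :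
    c ≤ sval A j := by
  refine le_sval_of_subspace A hj hc (ℝ ∙ w)ᗮ ?_ fun x hx =>
    h x (Submodule.mem_orthogonal_singleton_iff_inner_right.1 hx)
  have := (ℝ ∙ w).finrank_add_finrank_orthogonal
  rw [finrank_span_singleton hw, finrank_euclideanSpace] at this
  omega

lemma sval_antitone (A : Matrix m n ℝ) {i j : ℕ} (hi : 0 < i) (hij : i ≤ j) :
    sval A j ≤ sval A i :=
  csInf_le_csInf ⟨0, fun _ ⟨_, _, hx⟩ => hx ▸ norm_nonneg _⟩
    ⟨specNorm A, 0, by simpa using hi, by simp⟩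
    fun _ ⟨B, hB, hx⟩ => ⟨B, hB.trans_le hij, hx⟩

lemma sval_one {j : ℕ} (hj : 0 < j) (hjn : j ≤ Fintype.card n) :
    sval (1 : Matrix n n ℝ) j = 1 := by
  refine le_antisymm ((sval_le_specNorm 1 hj).trans ?_) (le_sval_of_forall 1 hj hjn zero_le_one
    fun x => by simp)
  rw [← diagonal_one, specNorm_diagonal]
  exact pi_norm_le_iff_of_nonneg zero_le_one |>.2 fun _ => by simp

lemma vol_one : vol (1 : Matrix n n ℝ) = 1 := by
  refine Finset.prod_eq_one fun j hj => ?_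
  rw [Finset.mem_Icc, min_self] at hj
  exact sval_one hj.1 hj.2

lemma vol_fin_three (A : Matrix (Fin 3) (Fin 3) ℝ) :
    vol A = sval A 1 * sval A 2 * sval A 3 := by
  simp [vol, show Finset.Icc 1 3 = {1, 2, 3} from rfl, mul_assoc]

end SingularValues

section MaxAbs

variable {m n : Type*} [Fintype m] [Fintype n]

lemma maxAbs_le [Nonempty m] [Nonempty n] (A : Matrix m n ℝ) {c : ℝ}
    (h : ∀ i j, |A i j| ≤ c) : maxAbs A ≤ c :=
  ciSup_le fun i => ciSup_le fun j => h i j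

lemma abs_le_maxAbs (A : Matrix m n ℝ) (i : m) (j : n) : |A i j| ≤ maxAbs A :=
  (le_ciSup (Set.finite_range _).bddAbove j).trans
    (le_ciSup (f := fun i => ⨆ j, |A i j|) (Set.finite_range _).bddAbove i)

end MaxAbs

section Example

variable (ν : ℝ)

lemma eA_eq_mul_add_diagonal : eA ν =
    fromRows !![1, 0; 0, 1; 0, 0] !![-ν, 1; 0, 0] * fromCols !![1, 0, 0; 0, 1, 0] !![1, 0; ν, 0] +
      diagonal (Sum.elim ![0, 0, 1] ![0, 1]) := by
  ext (i | i) (j | j) <;> fin_cases i <;> fin_cases j <;>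
    simp [eA, eA12, eA21, eA22, one_apply]

lemma sval_eA_three_le : sval (eA ν) 3 ≤ 1 := by
  rw [eA_eq_mul_add_diagonal]
  refine (sval_mul_add_le_specNorm _ _ _ (by norm_num)).trans ?_
  rw [specNorm_diagonal]
  refine pi_norm_le_iff_of_nonneg zero_le_one |>.2 fun i => ?_
  rcases i with i | i <;> fin_cases i <;> simp

lemma norm_sq_toEuclideanLin_eA (x : EuclideanSpace ℝ (Fin 3 ⊕ Fin 2)) :
    ‖toEuclideanLin (eA ν) x‖ ^ 2 = (x (.inl 0) + x (.inr 0)) ^ 2 +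
      (x (.inl 1) + ν * x (.inr 0)) ^ 2 + x (.inl 2) ^ 2 + (-(ν * x (.inl 0)) + x (.inl 1)) ^ 2 +
      x (.inr 1) ^ 2 := by
  simp [EuclideanSpace.real_norm_sq_eq, eA, eA12, eA21, eA22, Fintype.sum_sum_type,
    Fin.sum_univ_three, Fin.sum_univ_two, mulVec, dotProduct, one_apply, add_assoc]

lemma one_le_sval_eA_four : 1 ≤ sval (eA ν) 4 := by
  refine le_sval_of_orthogonal_singleton (eA ν) (by norm_num) (by simp) zero_le_one
    (w := WithLp.toLp 2 (Sum.elim ![1, ν, 0] ![-1, 0]))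
    (fun hw => by simpa using congr_arg (· (Sum.inl 0)) hw) fun x hx => ?_
  have hinner : x (.inl 0) + x (.inl 1) * ν + -x (.inr 0) = 0 := by
    simpa [PiLp.inner_apply, Fintype.sum_sum_type, Fin.sum_univ_three, Fin.sum_univ_two] using hx
  have hx4 : x (.inr 0) = x (.inl 0) + ν * x (.inl 1) := by linarith
  rw [norm_sq_toEuclideanLin_eA, EuclideanSpace.real_norm_sq_eq, Fintype.sum_sum_type,
    Fin.sum_univ_three, Fin.sum_univ_two, hx4]
  -- on this hyperplane `‖A x‖² - ‖x‖² = (1 + ν²) (x₁² + x₂² + x₄²)`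
  nlinarith [mul_nonneg (add_nonneg zero_le_one (sq_nonneg ν)) (add_nonneg (add_nonneg
    (sq_nonneg (x (.inl 0))) (sq_nonneg (x (.inl 1)))) (sq_nonneg (x (.inl 0) + ν * x (.inl 1))))]

lemma sval_eA_three_four : sval (eA ν) 3 = 1 ∧ sval (eA ν) 4 = 1 := by
  have h43 := sval_antitone (eA ν) (i := 3) (j := 4) (by norm_num) (by norm_num)
  have h3 := sval_eA_three_le ν
  have h4 := one_le_sval_eA_four ν
  constructor <;> linarith

noncomputable def eB : Matrix (Fin 3) (Fin 3) ℝ := !![0, 0, ν; 0, 1, 0; -ν, 0, 0]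

lemma submatrix_eA : (eA ν).submatrix ![Sum.inl 1, Sum.inl 2, Sum.inr 0]
    ![Sum.inl 0, Sum.inl 2, Sum.inr 0] = eB ν := by
  ext i j
  fin_cases i <;> fin_cases j <;> simp [eA, eA12, eA21, eA22, eB, one_apply]

lemma norm_sq_toEuclideanLin_eB (x : EuclideanSpace ℝ (Fin 3)) :
    ‖toEuclideanLin (eB ν) x‖ ^ 2 = (ν * x 2) ^ 2 + x 1 ^ 2 + (ν * x 0) ^ 2 := by
  simp [EuclideanSpace.real_norm_sq_eq, eB, Fin.sum_univ_three, mulVec, vec3_dotProduct]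

lemma eB_eq_mul_add_diagonal : eB ν =
    (!![1, 0; 0, 0; 0, 1] : Matrix (Fin 3) (Fin 2) ℝ) * !![0, 0, ν; -ν, 0, 0] +
      diagonal ![0, 1, 0] := by
  ext i j
  fin_cases i <;> fin_cases j <;> simp [eB]

variable {ν}

lemma sval_eB_one_le (hν : 1 ≤ ν) : sval (eB ν) 1 ≤ ν := by
  refine (sval_le_specNorm _ one_pos).trans
    (specNorm_le_of_forall_norm_sq_le _ (by linarith) fun x => ?_)
  rw [norm_sq_toEuclideanLin_eB, EuclideanSpace.real_norm_sq_eq, Fin.sum_univ_three]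
  nlinarith [one_le_pow₀ (n := 2) hν, sq_nonneg (x 1)]

lemma le_sval_eB_two (hν : 0 ≤ ν) : ν ≤ sval (eB ν) 2 := by
  refine le_sval_of_orthogonal_singleton (eB ν) (by norm_num) (by simp) hν
    (w := EuclideanSpace.single 1 1) (by simp) fun x hx => ?_
  rw [EuclideanSpace.inner_single_left, map_one, one_mul] at hx
  rw [norm_sq_toEuclideanLin_eB, EuclideanSpace.real_norm_sq_eq, Fin.sum_univ_three, hx]
  exact le_of_eq (by ring)

lemma sval_eB_three (hν : 1 ≤ ν) : sval (eB ν) 3 = 1 := by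
  refine le_antisymm ?_ (le_sval_of_forall _ (by norm_num) (by simp) zero_le_one fun x => ?_)
  · rw [eB_eq_mul_add_diagonal]
    refine (sval_mul_add_le_specNorm _ _ _ (by norm_num)).trans ?_
    rw [specNorm_diagonal]
    exact pi_norm_le_iff_of_nonneg zero_le_one |>.2 fun i => by fin_cases i <;> simp
  · rw [norm_sq_toEuclideanLin_eB, EuclideanSpace.real_norm_sq_eq, Fin.sum_univ_three]
    nlinarith [one_le_pow₀ (n := 2) hν, sq_nonneg (x 0), sq_nonneg (x 2)]

lemma vol_eB (hν : 1 ≤ ν) : vol (eB ν) = ν ^ 2 := by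
  have h21 := sval_antitone (eB ν) (i := 1) (j := 2) (by norm_num) (by norm_num)
  have h1 := sval_eB_one_le hν
  have h2 := le_sval_eB_two (zero_le_one.trans hν)
  rw [vol_fin_three, sval_eB_three hν, le_antisymm h1 (h2.trans h21),
    le_antisymm (h21.trans h1) h2]
  ring

lemma schur_complement_eA : eA22 - eA21 ν * (1 : Matrix (Fin 3) (Fin 3) ℝ)⁻¹ * eA12 ν =
    diagonal ![0, 1] := by
  ext i j
  fin_cases i <;> fin_cases j <;> simp [eA12, eA21, eA22]

lemma specNorm_diagonal_zero_one :
    specNorm (diagonal ![0, 1] : Matrix (Fin 2) (Fin 2) ℝ) = 1 := by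
  rw [specNorm_diagonal]
  refine le_antisymm (pi_norm_le_iff_of_nonneg zero_le_one |>.2 fun i => ?_) ?_
  · fin_cases i <;> simp
  · simpa using norm_le_pi_norm ![(0 : ℝ), 1] 1

lemma maxAbs_eA21 (hν : 1 ≤ ν) : maxAbs (eA21 ν) = ν := by
  have hν₀ : 0 ≤ ν := zero_le_one.trans hν
  refine le_antisymm (maxAbs_le _ fun i j => ?_) ?_
  · fin_cases i <;> fin_cases j <;> simp [eA21, abs_of_nonneg hν₀, hν₀, hν]
  · simpa [eA21, abs_of_nonneg hν₀] using abs_le_maxAbs (eA21 ν) 0 0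

lemma maxAbs_eA12 (hν : 1 ≤ ν) : maxAbs (eA12 ν) = ν := by
  have hν₀ : 0 ≤ ν := zero_le_one.trans hν
  refine le_antisymm (maxAbs_le _ fun i j => ?_) ?_
  · fin_cases i <;> fin_cases j <;> simp [eA12, abs_of_nonneg hν₀, hν₀, hν]
  · simpa [eA12, abs_of_nonneg hν₀] using abs_le_maxAbs (eA12 ν) 1 0

end Example

theorem statement_18 (ν : ℝ) (hν : 1 < ν) :
    (sval (eA ν) 3 = 1 ∧ sval (eA ν) 4 = 1 ∧
      sval (1 : Matrix (Fin 3) (Fin 3) ℝ) 3 = 1 ∧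
      sval (eA ν) 3 ≤ sval (1 : Matrix (Fin 3) (Fin 3) ℝ) 3) ∧
    (specNorm (eA22 - eA21 ν * (1 : Matrix (Fin 3) (Fin 3) ℝ)⁻¹ * eA12 ν) = 1 ∧
      specNorm (eA22 - eA21 ν * (1 : Matrix (Fin 3) (Fin 3) ℝ)⁻¹ * eA12 ν) =
        sval (eA ν) 4) ∧
    (maxAbs (eA21 ν * (1 : Matrix (Fin 3) (Fin 3) ℝ)⁻¹) = ν ∧
      maxAbs ((1 : Matrix (Fin 3) (Fin 3) ℝ)⁻¹ * eA12 ν) = ν) ∧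
    (vol ((eA ν).submatrix ![Sum.inl 1, Sum.inl 2, Sum.inr 0]
        ![Sum.inl 0, Sum.inl 2, Sum.inr 0]) = ν ^ 2 ∧
      ν ^ 2 = ν ^ 2 * vol (1 : Matrix (Fin 3) (Fin 3) ℝ)) ∧
    (∀ γ : ℝ, 1 ≤ γ → γ < ν ^ 2 →
      ¬ (∀ (r c : Fin 3 → Fin 3 ⊕ Fin 2), DiffOne Sum.inl r → DiffOne Sum.inl c →
        vol ((eA ν).submatrix r c) ≤ γ * vol (1 : Matrix (Fin 3) (Fin 3) ℝ))) := by
  obtain ⟨hA3, hA4⟩ := sval_eA_three_four ν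
  have hI3 : sval (1 : Matrix (Fin 3) (Fin 3) ℝ) 3 = 1 := sval_one (by norm_num) (by simp)
  have hvol : vol ((eA ν).submatrix ![Sum.inl 1, Sum.inl 2, Sum.inr 0]
      ![Sum.inl 0, Sum.inl 2, Sum.inr 0]) = ν ^ 2 := by
    rw [submatrix_eA, vol_eB hν.le]
  rw [schur_complement_eA, specNorm_diagonal_zero_one, inv_one, Matrix.mul_one, Matrix.one_mul,
    maxAbs_eA21 hν.le, maxAbs_eA12 hν.le, vol_one, mul_one, hA3, hA4, hI3, hvol]
  refine ⟨by simp, by simp, by simp, by simp, fun γ _ hγ hmax => ?_⟩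
  have hsub := hmax ![Sum.inl 1, Sum.inl 2, Sum.inr 0] ![Sum.inl 0, Sum.inl 2, Sum.inr 0]
    ⟨by decide, by decide⟩ ⟨by decide, by decide⟩
  rw [hvol, mul_one] at hsub
  linarith
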